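/- arXiv:1008.1968 — 2 statements merged into one kernel-verified Lean document; each statement's English description precedes it below -/
import Mathlib

section
/- For every positive integer m, ∑_{d ∣ m} d·f(d) = m·J(m). -/
/-- `f n = ∏_{p ∣ n, p > 2} (p - 1)/(p - 2)`. -/
noncomputable def f (n : ℕ) : ℝ :=
  ∏ p ∈ n.primeFactors.filter (fun p => 2 < p), ((p : ℝ) - 1) / ((p : ℝ) - 2)

/-- `J m = (2 - 1/2^k) ∏_{p^ℓ ∥ m, p > 2} (1 - 2/p^{ℓ+1})(1 - 2/p)⁻¹`
where `2^k ∥ m`. -/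
noncomputable def J (m : ℕ) : ℝ :=
  (2 - 1 / 2 ^ (m.factorization 2)) *
    ∏ p ∈ m.primeFactors.filter (fun p => 2 < p),
      (1 - 2 / (p : ℝ) ^ (m.factorization p + 1)) * (1 - 2 / (p : ℝ))⁻¹

/-! Both sides are multiplicative in `m`: the left side is the Dirichlet convolution of `ζ`
with `d ↦ d f(d)`, and `m J(m)` is the product of the local factors `p^k * localJ p k` over
`p^k ∥ m`. At a prime power the divisor sum is geometric, since `f(2^i) = 1` and
`f(p^i) = (p-1)/(p-2)` for odd `p` and `i ≥ 1`; it sums to `2^(k+1) - 1`, resp.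
`(p^(k+1) - 2)/(p - 2)`, which is `p^k * localJ p k`. -/

open ArithmeticFunction Finset
open scoped ArithmeticFunction.zeta

lemma f_one : f 1 = 1 := by simp [f]

lemma f_mul_of_coprime {a b : ℕ} (ha : a ≠ 0) (hb : b ≠ 0) (hab : a.Coprime b) :
    f (a * b) = f a * f b := by
  unfold f
  rw [Nat.primeFactors_mul ha hb, filter_union,
    prod_union (disjoint_filter_filter hab.disjoint_primeFactors)]

lemma f_prime_pow_succ {p : ℕ} (hp : p.Prime) (k : ℕ) :
    f (p ^ (k + 1)) = if p = 2 then 1 else ((p : ℝ) - 1) / ((p : ℝ) - 2) := by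
  rw [f, Nat.primeFactors_pow p k.succ_ne_zero, hp.primeFactors, filter_singleton]
  rcases eq_or_ne p 2 with rfl | hp2
  · simp
  · simp [hp2, hp.two_le.lt_of_ne' hp2]

noncomputable def natCastMulF : ArithmeticFunction ℝ := ⟨fun d => d * f d, by simp⟩

lemma natCastMulF_apply (d : ℕ) : natCastMulF d = d * f d := rfl

lemma isMultiplicative_natCastMulF : natCastMulF.IsMultiplicative := by
  refine IsMultiplicative.iff_ne_zero.mpr ⟨by simp [natCastMulF_apply, f_one], ?_⟩
  intro a b ha hb hab
  simp only [natCastMulF_apply, f_mul_of_coprime ha hb hab, Nat.cast_mul]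
  ring

noncomputable def localJ (p k : ℕ) : ℝ :=
  if p = 2 then 2 - 1 / 2 ^ k else (1 - 2 / (p : ℝ) ^ (k + 1)) * (1 - 2 / (p : ℝ))⁻¹

lemma J_eq_prod_localJ (m : ℕ) :
    J m = ∏ p ∈ m.primeFactors, localJ p (m.factorization p) := by
  have hodd : m.primeFactors.filter (fun p => ¬p = 2) = m.primeFactors.filter (fun p => 2 < p) :=
    filter_congr fun p hp => by
      have := (Nat.prime_of_mem_primeFactors hp).two_le
      omega
  have htwo :
      ∏ p ∈ m.primeFactors.filter (fun p => p = 2), (2 - 1 / 2 ^ m.factorization p : ℝ) =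
        2 - 1 / 2 ^ m.factorization 2 := by
    rw [filter_eq', apply_ite (∏ p ∈ ·, (2 - 1 / 2 ^ m.factorization p : ℝ))]
    split_ifs with h2
    · simp
    · norm_num [Finsupp.notMem_support_iff.mp (by rwa [Nat.support_factorization])]
  simp only [localJ]
  rw [prod_ite, htwo, hodd, J]

lemma sum_prime_pow_mul_f {p : ℕ} (hp : p.Prime) (k : ℕ) :
    ∑ i ∈ range (k + 1), ((p : ℝ) ^ i * f (p ^ i)) = p ^ k * localJ p k := by
  rcases eq_or_ne p 2 with rfl | hp2
  · induction k with
    | zero => norm_num [localJ, f_one]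
    | succ k ih =>
      rw [sum_range_succ, ih, f_prime_pow_succ hp, localJ, localJ]
      simp only [if_true]
      field_simp
      ring
  · have hp_gt_two : (2 : ℝ) < p := by exact_mod_cast hp.two_le.lt_of_ne' hp2
    have hone_sub : 1 - 2 / (p : ℝ) ≠ 0 :=
      (sub_pos.mpr ((div_lt_one (by positivity)).mpr hp_gt_two)).ne'
    induction k with
    | zero => simp [localJ, hp2, f_one, hone_sub]
    | succ k ih =>
      rw [sum_range_succ, ih, f_prime_pow_succ hp, localJ, localJ]
      simp only [hp2, if_false]
      field_simp
      ring

theorem sum_df_eq_mJ_general (m : ℕ) :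
    ∑ d ∈ m.divisors, (d : ℝ) * f d = m * J m := by
  rcases eq_or_ne m 0 with rfl | hm
  · simp
  calc ∑ d ∈ m.divisors, (d : ℝ) * f d
      = ((ζ : ArithmeticFunction ℝ) * natCastMulF) m := by
        rw [coe_zeta_mul_apply]; rfl
    _ = ∏ p ∈ m.primeFactors, (p : ℝ) ^ m.factorization p * localJ p (m.factorization p) := by
        have hmul := isMultiplicative_zeta.natCast.mul isMultiplicative_natCastMulF
        rw [hmul.multiplicative_factorization _ hm, Finsupp.prod, Nat.support_factorization]
        refine prod_congr rfl fun p hp => ?_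
        rw [coe_zeta_mul_apply, Nat.sum_divisors_prime_pow (Nat.prime_of_mem_primeFactors hp)]
        simpa [natCastMulF_apply] using sum_prime_pow_mul_f (Nat.prime_of_mem_primeFactors hp) _
    _ = m * J m := by
        rw [prod_mul_distrib, J_eq_prod_localJ]
        congr 1
        exact_mod_cast (Nat.prod_primeFactors_pow_factorization hm).symm

theorem sum_df_eq_mJ (m : ℕ) (hm : 0 < m) :
    ∑ d ∈ m.divisors, (d : ℝ) * f d = m * J m :=
  sum_df_eq_mJ_general m
end

section
/- For all integers m ≥ 1 and N ≥ 1, the coefficient of z^m in the polynomial F_N(z) is a nonnegative integer that is at most a(m); moreover, if N ≥ m then this coefficient equals a(m). -/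
/-- `R n` is the number of ordered pairs `(p, q)` of odd primes with `p + q = n`. -/
noncomputable def R (n : ℕ) : ℕ :=
  {pq : ℕ × ℕ | pq.1.Prime ∧ Odd pq.1 ∧ pq.2.Prime ∧ Odd pq.2 ∧ pq.1 + pq.2 = n}.ncard

/-- `a m = ∑_{d ∣ m} R d`. -/
noncomputable def a (m : ℕ) : ℕ := ∑ d ∈ m.divisors, R d

/-- `F N = ∑_{k=0}^{N-1} ( ∑_{n=1}^{N-1} χ_P(n) z^{kn} )²`, where `χ_P` is the
indicator function of the odd primes. -/
noncomputable def F (N : ℕ) : Polynomial ℤ :=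
  ∑ k ∈ Finset.range N,
    (∑ n ∈ Finset.range N,
      if n.Prime ∧ Odd n then (Polynomial.X : Polynomial ℤ) ^ (k * n) else 0) ^ 2

/-!
Expanding the square, the coefficient of `z^m` in `F N` counts the triples `(k, p, q)` with
`k, p, q < N`, `p, q` odd primes and `k (p + q) = m`, while `a m` counts the pairs `(d, (p, q))`
with `d ∣ m` and `p + q = d`. For `m ≠ 0` the map `(k, p, q) ↦ (p + q, (p, q))` is injective
from the first set to the second; when `m ≤ N` it is onto, since `k = m / d < m` and `p, q < d ≤ m`.
-/

open Finset Polynomial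

def oddPrimesBelow (N : ℕ) : Finset ℕ := {n ∈ range N | n.Prime ∧ Odd n}

def goldbachPairs (d : ℕ) : Finset (ℕ × ℕ) :=
  {pq ∈ antidiagonal d | (pq.1.Prime ∧ Odd pq.1) ∧ (pq.2.Prime ∧ Odd pq.2)}

lemma mem_goldbachPairs {d p q : ℕ} :
    (p, q) ∈ goldbachPairs d ↔ p + q = d ∧ (p.Prime ∧ Odd p) ∧ (q.Prime ∧ Odd q) := by
  simp only [goldbachPairs, mem_filter, HasAntidiagonal.mem_antidiagonal]

lemma R_eq_card_goldbachPairs (d : ℕ) : R d = #(goldbachPairs d) := by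
  rw [R, ← Set.ncard_coe_finset]
  congr 1
  ext ⟨p, q⟩
  simp only [mem_coe, mem_goldbachPairs, Set.mem_ofPred_eq]
  tauto

lemma a_eq_card_sigma_goldbachPairs (m : ℕ) : a m = #(m.divisors.sigma goldbachPairs) := by
  simp only [a, R_eq_card_goldbachPairs, card_sigma]

lemma coeff_sq_sum_X_pow_mul {S : Type*} [CommSemiring S] (s : Finset ℕ) (k m : ℕ) :
    ((∑ n ∈ s, (X : S[X]) ^ (k * n)) ^ 2).coeff m = #{pq ∈ s ×ˢ s | k * (pq.1 + pq.2) = m} := by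
  simp only [sq, sum_mul_sum, ← pow_add, ← mul_add, finsetSum_coeff, coeff_X_pow, ← sum_product',
    sum_boole, eq_comm]

lemma F_eq_sum_sq (N : ℕ) : F N = ∑ k ∈ range N, (∑ n ∈ oddPrimesBelow N, X ^ (k * n)) ^ 2 := by
  simp only [F, oddPrimesBelow, sum_filter]

def scaledGoldbachPairs (N m : ℕ) : Finset (Σ _ : ℕ, ℕ × ℕ) :=
  (range N).sigma fun k => {pq ∈ oddPrimesBelow N ×ˢ oddPrimesBelow N | k * (pq.1 + pq.2) = m}

lemma coeff_F_eq_card (N m : ℕ) : (F N).coeff m = #(scaledGoldbachPairs N m) := by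
  simp only [F_eq_sum_sq, finsetSum_coeff, coeff_sq_sum_X_pow_mul, scaledGoldbachPairs, card_sigma,
    Nat.cast_sum]

lemma mem_scaledGoldbachPairs {N m k p q : ℕ} :
    ⟨k, (p, q)⟩ ∈ scaledGoldbachPairs N m ↔
      k < N ∧ ((p < N ∧ p.Prime ∧ Odd p) ∧ (q < N ∧ q.Prime ∧ Odd q)) ∧ k * (p + q) = m := by
  simp only [scaledGoldbachPairs, oddPrimesBelow, mem_sigma, mem_filter, mem_product, mem_range]

lemma card_scaledGoldbachPairs_le {N m : ℕ} (hm : m ≠ 0) :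
    #(scaledGoldbachPairs N m) ≤ #(m.divisors.sigma goldbachPairs) := by
  refine card_le_card_of_injOn (fun x => ⟨x.2.1 + x.2.2, x.2⟩) ?_ ?_
  · rintro ⟨k, p, q⟩ hx
    obtain ⟨-, ⟨⟨-, hp⟩, ⟨-, hq⟩⟩, hkm⟩ := mem_scaledGoldbachPairs.mp hx
    exact mem_sigma.mpr
      ⟨Nat.mem_divisors.mpr ⟨Dvd.intro_left k hkm, hm⟩, mem_goldbachPairs.mpr ⟨rfl, hp, hq⟩⟩
  · rintro ⟨k, p, q⟩ hx ⟨k', p', q'⟩ hx' h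
    simp only [Sigma.mk.injEq, Prod.mk.injEq, heq_eq_eq] at h
    obtain ⟨-, rfl, rfl⟩ := h
    obtain ⟨-, ⟨⟨-, hp, -⟩, -⟩, hkm⟩ := mem_scaledGoldbachPairs.mp hx
    obtain ⟨-, -, hkm'⟩ := mem_scaledGoldbachPairs.mp hx'
    have hpq : 0 < p + q := Nat.add_pos_left hp.pos q
    rw [Nat.eq_of_mul_eq_mul_right hpq (hkm.trans hkm'.symm)]

lemma card_sigma_goldbachPairs_le {N m : ℕ} (hm : m ≠ 0) (hmN : m ≤ N) :
    #(m.divisors.sigma goldbachPairs) ≤ #(scaledGoldbachPairs N m) := by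
  refine card_le_card_of_injOn (fun x => ⟨m / x.1, x.2⟩) ?_ ?_
  · rintro ⟨d, p, q⟩ hx
    simp only [coe_sigma, Set.mem_sigma_iff, mem_coe, Nat.mem_divisors, mem_goldbachPairs] at hx
    obtain ⟨⟨hdm, -⟩, rfl, ⟨hp, hp'⟩, ⟨hq, hq'⟩⟩ := hx
    have hm0 : 0 < m := Nat.pos_of_ne_zero hm
    have hpqm : p + q ≤ m := Nat.le_of_dvd hm0 hdm
    have hp2 := hp.two_le
    have hq2 := hq.two_le
    dsimp only
    refine mem_scaledGoldbachPairs.mpr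
      ⟨?_, ⟨⟨by omega, hp, hp'⟩, ⟨by omega, hq, hq'⟩⟩, Nat.div_mul_cancel hdm⟩
    exact (Nat.div_lt_self hm0 (by omega)).trans_le hmN
  · rintro ⟨d, p, q⟩ hx ⟨d', p', q'⟩ hx' h
    simp only [Sigma.mk.injEq, Prod.mk.injEq, heq_eq_eq] at h
    obtain ⟨-, rfl, rfl⟩ := h
    simp only [coe_sigma, Set.mem_sigma_iff, mem_coe, mem_goldbachPairs] at hx hx'
    rw [← hx.2.1, ← hx'.2.1]

theorem coeff_F_le_a_general (m N : ℕ) (hm : 1 ≤ m) :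
    0 ≤ (F N).coeff m ∧ (F N).coeff m ≤ (a m : ℤ) ∧ (m ≤ N → (F N).coeff m = (a m : ℤ)) := by
  have hm : m ≠ 0 := Nat.one_le_iff_ne_zero.mp hm
  rw [coeff_F_eq_card, a_eq_card_sigma_goldbachPairs]
  refine ⟨by positivity, by exact_mod_cast card_scaledGoldbachPairs_le hm, fun hmN => ?_⟩
  exact_mod_cast (card_scaledGoldbachPairs_le hm).antisymm (card_sigma_goldbachPairs_le hm hmN)

theorem coeff_F_le_a (m N : ℕ) (hm : 1 ≤ m) (hN : 1 ≤ N) :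
    0 ≤ (F N).coeff m ∧ (F N).coeff m ≤ (a m : ℤ) ∧ (m ≤ N → (F N).coeff m = (a m : ℤ)) :=
  coeff_F_le_a_general m N hm
end
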